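/- arXiv:2007.06393 — 5 statements merged into one kernel-verified Lean document; each statement's English description precedes it below -/
import Mathlib

section
/- Let m¹, m² > 0 and d¹, d² ∈ [0,1), and define the responsive-switching mean matrices M(1) := [[m¹, 0], [1−d¹, 0]] and M(2) := [[0, m²], [0, 1−d²]]. Then, ℙ-almost surely, (1/n) · log‖M(I_1)·M(I_2)·…·M(I_n)‖ converges, as n → ∞, to ( s₂·log m¹ + s₁·log(1−d²) + s₁s₂·log( m²(1−d¹) / (m¹(1−d²)) ) ) / (s₁+s₂). -/
open MeasureTheory Filter Topology

/-- The entrywise sum-of-absolute-values "norm" of a real matrix. -/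
noncomputable def matNorm {m n : Type*} [Fintype m] [Fintype n] (M : Matrix m n ℝ) : ℝ :=
  ∑ i, ∑ j, |M i j|

/-- The stationary distribution π = (s₂/(s₁+s₂), s₁/(s₁+s₂)) of the binary environment
(environment state "1" is index 0, state "2" is index 1). -/
noncomputable def envPi (s : Fin 2 → ℝ) : Fin 2 → ℝ :=
  ![s 1 / (s 0 + s 1), s 0 / (s 0 + s 1)]

/-- The transition matrix P of the binary environment. -/
noncomputable def envP (s : Fin 2 → ℝ) : Matrix (Fin 2) (Fin 2) ℝ :=
  !![1 - s 0, s 0; s 1, 1 - s 1]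

/-!
Each `M(i)` is the rank-one matrix `cᵢ eᵢᵀ`, where `cᵢ` is column `i` of
`c = [[m¹, m²], [1-d¹, 1-d²]]`, so products telescope:
`M(a₀) ⋯ M(aₙ) = (∏_{k<n} c(a_k, a_{k+1})) • c_{a₀} e_{aₙ}ᵀ`.
Hence `log ‖M(I₁) ⋯ M(I_{n+1})‖` is the Birkhoff sum of `ω ↦ log c(I₁, I₂)` plus the bounded term
`log ‖c_{I₁}‖`, and by the ergodic theorem `1/n` times it tends to the mean
`∑ πᵢ Pᵢⱼ log c(i, j)`, which is the stated constant.

Birkhoff's theorem for an ergodic map follows from Garsia's maximal ergodic theorem: if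
`∫ f < 0`, the set where the Birkhoff sums of `f` are unbounded above is invariant, hence null or
conull, and conull is impossible since on it some Birkhoff sum is positive.
-/

open Function Set

section PointwiseErgodic

variable {Ω : Type*} {T : Ω → Ω} {f : Ω → ℝ}

/-- `maxBirkhoffSum T f N ω = max_{k ≤ N} birkhoffSum T f k ω`, written through the recursion
on which Garsia's proof of the maximal ergodic theorem rests. -/
noncomputable def maxBirkhoffSum (T : Ω → Ω) (f : Ω → ℝ) : ℕ → Ω → ℝ
  | 0, _ => 0
  | N + 1, ω => max 0 (f ω + maxBirkhoffSum T f N (T ω))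

theorem maxBirkhoffSum_nonneg (N : ℕ) (ω : Ω) : 0 ≤ maxBirkhoffSum T f N ω := by
  cases N with
  | zero => rfl
  | succ N => exact le_max_left _ _

theorem birkhoffSum_le_maxBirkhoffSum {n N : ℕ} (h : n ≤ N) (ω : Ω) :
    birkhoffSum T f n ω ≤ maxBirkhoffSum T f N ω := by
  induction N generalizing n ω with
  | zero =>
    obtain rfl : n = 0 := by omega
    simp [maxBirkhoffSum]
  | succ N ih =>
    cases n with
    | zero => simpa using maxBirkhoffSum_nonneg (N + 1) ω
    | succ n =>
      rw [birkhoffSum_succ']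
      refine le_max_of_le_right ?_
      gcongr
      exact ih (by omega) (T ω)

theorem exists_birkhoffSum_eq_maxBirkhoffSum (N : ℕ) (ω : Ω) :
    ∃ n ≤ N, birkhoffSum T f n ω = maxBirkhoffSum T f N ω := by
  induction N generalizing ω with
  | zero => exact ⟨0, le_rfl, rfl⟩
  | succ N ih =>
    obtain ⟨n, hn, h⟩ := ih (T ω)
    rcases max_choice 0 (f ω + maxBirkhoffSum T f N (T ω)) with h' | h'
    · exact ⟨0, by omega, by rw [maxBirkhoffSum, h', birkhoffSum_zero]⟩
    · exact ⟨n + 1, by omega, by rw [maxBirkhoffSum, h', birkhoffSum_succ', h]⟩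

theorem monotone_maxBirkhoffSum (ω : Ω) : Monotone (maxBirkhoffSum T f · ω) := by
  intro N N' h
  obtain ⟨n, hn, hn'⟩ := exists_birkhoffSum_eq_maxBirkhoffSum (T := T) (f := f) N ω
  show maxBirkhoffSum T f N ω ≤ _
  rw [← hn']
  exact birkhoffSum_le_maxBirkhoffSum (hn.trans h) ω

theorem maxBirkhoffSum_le_add_of_pos {N : ℕ} {ω : Ω} (h : 0 < maxBirkhoffSum T f N ω) :
    maxBirkhoffSum T f N ω ≤ f ω + maxBirkhoffSum T f N (T ω) := by
  cases N with
  | zero => exact absurd h (lt_irrefl 0)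
  | succ N =>
    have hpos : 0 < f ω + maxBirkhoffSum T f N (T ω) := by
      simpa [maxBirkhoffSum] using h
    rw [maxBirkhoffSum, max_eq_right hpos.le]
    gcongr
    exact monotone_maxBirkhoffSum (T ω) N.le_succ

theorem maxBirkhoffSum_le_birkhoffSum_abs (N : ℕ) (ω : Ω) :
    maxBirkhoffSum T f N ω ≤ birkhoffSum T (fun x => |f x|) N ω := by
  induction N generalizing ω with
  | zero => rfl
  | succ N ih =>
    rw [birkhoffSum_succ']
    refine max_le (add_nonneg (abs_nonneg _) (Finset.sum_nonneg fun _ _ => abs_nonneg _)) ?_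
    exact add_le_add (le_abs_self _) (ih (T ω))

variable [MeasurableSpace Ω] {μ : Measure Ω}

theorem measurable_birkhoffSum (hT : Measurable T) (hf : Measurable f) (n : ℕ) :
    Measurable (birkhoffSum T f n) :=
  Finset.measurable_sum _ fun k _ => hf.comp (hT.iterate k)

theorem measurable_maxBirkhoffSum (hT : Measurable T) (hf : Measurable f) (N : ℕ) :
    Measurable (maxBirkhoffSum T f N) := by
  induction N with
  | zero => exact measurable_const
  | succ N ih => exact measurable_const.max (hf.add (ih.comp hT))

theorem integrable_maxBirkhoffSum (hT : MeasurePreserving T μ μ) (hf : Measurable f)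
    (hfi : Integrable f μ) (N : ℕ) : Integrable (maxBirkhoffSum T f N) μ := by
  refine Integrable.mono' (g := birkhoffSum T (fun x => |f x|) N) ?_
    (measurable_maxBirkhoffSum hT.measurable hf N).aestronglyMeasurable
    (Eventually.of_forall fun ω => ?_)
  · exact integrable_finsetSum _ fun k _ => (hT.iterate k).integrable_comp_of_integrable hfi.abs
  · rw [Real.norm_of_nonneg (maxBirkhoffSum_nonneg N ω)]
    exact maxBirkhoffSum_le_birkhoffSum_abs N ω

theorem setIntegral_maxBirkhoffSum_pos_nonneg (hT : MeasurePreserving T μ μ) (hf : Measurable f)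
    (hfi : Integrable f μ) (N : ℕ) :
    0 ≤ ∫ ω in {ω | 0 < maxBirkhoffSum T f N ω}, f ω ∂μ := by
  set F := maxBirkhoffSum T f N
  have hFm : Measurable F := measurable_maxBirkhoffSum hT.measurable hf N
  have hF : Integrable F μ := integrable_maxBirkhoffSum hT hf hfi N
  have hFT : Integrable (fun ω => F (T ω)) μ := hT.integrable_comp_of_integrable hF
  have hA : MeasurableSet {ω | 0 < F ω} := measurableSet_lt measurable_const hFm
  have hle : ∀ ω, F ω - F (T ω) ≤ {ω | 0 < F ω}.indicator f ω := by
    intro ω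
    by_cases h : 0 < F ω
    · rw [indicator_of_mem (show ω ∈ {ω | 0 < F ω} from h)]
      linarith [maxBirkhoffSum_le_add_of_pos h]
    · rw [indicator_of_notMem (show ω ∉ {ω | 0 < F ω} from h)]
      linarith [maxBirkhoffSum_nonneg (T := T) (f := f) N (T ω)]
  calc 0 = ∫ ω, (F ω - F (T ω)) ∂μ := by
        rw [integral_sub hF hFT, ← integral_map hT.measurable.aemeasurable
          hFm.aestronglyMeasurable, hT.map_eq, sub_self]
    _ ≤ ∫ ω, {ω | 0 < F ω}.indicator f ω ∂μ := integral_mono (hF.sub hFT) (hfi.indicator hA) hle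
    _ = _ := integral_indicator hA

theorem setIntegral_exists_birkhoffSum_pos_nonneg (hT : MeasurePreserving T μ μ)
    (hf : Measurable f) (hfi : Integrable f μ) :
    0 ≤ ∫ ω in {ω | ∃ n, 0 < birkhoffSum T f n ω}, f ω ∂μ := by
  have hU : {ω | ∃ n, 0 < birkhoffSum T f n ω} = ⋃ N, {ω | 0 < maxBirkhoffSum T f N ω} := by
    ext ω
    simp only [mem_ofPred_eq, mem_iUnion]
    constructor
    · rintro ⟨n, hn⟩
      exact ⟨n, hn.trans_le (birkhoffSum_le_maxBirkhoffSum le_rfl ω)⟩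
    · rintro ⟨N, hN⟩
      obtain ⟨n, -, hn⟩ := exists_birkhoffSum_eq_maxBirkhoffSum (T := T) (f := f) N ω
      exact ⟨n, hn ▸ hN⟩
  rw [hU]
  refine ge_of_tendsto' (tendsto_setIntegral_of_monotone
    (fun N => measurableSet_lt measurable_const (measurable_maxBirkhoffSum hT.measurable hf N))
    (fun N N' h ω hω => lt_of_lt_of_le hω (monotone_maxBirkhoffSum ω h)) hfi.integrableOn)
    (setIntegral_maxBirkhoffSum_pos_nonneg hT hf hfi)

theorem Ergodic.ae_bddAbove_birkhoffSum [IsFiniteMeasure μ] (hT : Ergodic T μ) (hf : Measurable f)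
    (hfi : Integrable f μ) (hneg : ∫ ω, f ω ∂μ < 0) :
    ∀ᵐ ω ∂μ, BddAbove (range (birkhoffSum T f · ω)) := by
  set E := {ω | ∀ K : ℕ, ∃ n, (K : ℝ) < birkhoffSum T f n ω}
  have hEm : MeasurableSet E := by
    simp only [E, ofPred_forall, ofPred_exists]
    exact .iInter fun K => .iUnion fun n =>
      measurableSet_lt measurable_const (measurable_birkhoffSum hT.measurable hf n)
  have hEinv : T ⁻¹' E ⊆ E := by
    intro ω hω K
    obtain ⟨K', hK'⟩ := exists_nat_gt (K - f ω)
    obtain ⟨n, hn⟩ := hω K'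
    exact ⟨n + 1, by rw [birkhoffSum_succ']; linarith⟩
  -- `E` is invariant, so null or conull; conull would contradict the maximal ergodic theorem.
  rcases hT.ae_empty_or_univ_of_preimage_ae_le hEm.nullMeasurableSet hEinv.eventuallyLE with h | h
  · filter_upwards [measure_eq_zero_iff_ae_notMem.mp (ae_eq_empty.mp h)] with ω hω
    simp only [E, mem_ofPred_eq, not_forall, not_exists, not_lt] at hω
    obtain ⟨K, hK⟩ := hω
    exact ⟨K, forall_mem_range.2 hK⟩
  · have hP : {ω | ∃ n, 0 < birkhoffSum T f n ω} =ᵐ[μ] univ :=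
      ae_eq_univ.2 (measure_mono_null (compl_subset_compl.2 fun ω hω => by
        simpa using hω 0) (ae_eq_univ.1 h))
    have := setIntegral_exists_birkhoffSum_pos_nonneg hT.toMeasurePreserving hf hfi
    rw [setIntegral_congr_set hP, setIntegral_univ] at this
    linarith

variable [IsProbabilityMeasure μ]

theorem Ergodic.ae_eventually_birkhoffAverage_lt (hT : Ergodic T μ) (hf : Measurable f)
    (hfi : Integrable f μ) {c : ℝ} (hc : ∫ ω, f ω ∂μ < c) :
    ∀ᵐ ω ∂μ, ∀ᶠ n in atTop, birkhoffAverage ℝ T f n ω < c := by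
  obtain ⟨c', hc'₁, hc'₂⟩ := exists_between hc
  have hneg : ∫ ω, (f ω - c') ∂μ < 0 := by
    rw [integral_sub hfi (integrable_const c'), integral_const, probReal_univ, one_smul]
    linarith
  filter_upwards [hT.ae_bddAbove_birkhoffSum (hf.sub measurable_const)
    (hfi.sub (integrable_const c')) hneg] with ω ⟨K, hK⟩
  have hsmall : ∀ᶠ n : ℕ in atTop, K / n < c - c' :=
    (tendsto_const_div_atTop_nhds_zero_nat K).eventually (gt_mem_nhds (sub_pos.2 hc'₂))
  filter_upwards [hsmall, eventually_gt_atTop 0] with n hn hn0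
  have hn0' : (0 : ℝ) < n := by exact_mod_cast hn0
  have hS : birkhoffSum T f n ω - n * c' ≤ K := by
    simpa [birkhoffSum, Finset.sum_sub_distrib] using hK (mem_range_self n)
  rw [birkhoffAverage, smul_eq_mul, inv_mul_lt_iff₀ hn0']
  rw [div_lt_iff₀ hn0'] at hn
  linarith

theorem Ergodic.ae_tendsto_birkhoffAverage (hT : Ergodic T μ) (hf : Measurable f)
    (hfi : Integrable f μ) :
    ∀ᵐ ω ∂μ, Tendsto (birkhoffAverage ℝ T f · ω) atTop (𝓝 (∫ ω, f ω ∂μ)) := by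
  have hup : ∀ᵐ ω ∂μ, ∀ k : ℕ, ∀ᶠ n in atTop,
      birkhoffAverage ℝ T f n ω < ∫ ω, f ω ∂μ + 1 / (k + 1) :=
    ae_all_iff.2 fun k => hT.ae_eventually_birkhoffAverage_lt hf hfi
      (lt_add_of_pos_right _ Nat.one_div_pos_of_nat)
  have hlow : ∀ᵐ ω ∂μ, ∀ k : ℕ, ∀ᶠ n in atTop,
      birkhoffAverage ℝ T (-f) n ω < -∫ ω, f ω ∂μ + 1 / (k + 1) :=
    ae_all_iff.2 fun k => hT.ae_eventually_birkhoffAverage_lt hf.neg hfi.neg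
      (by rw [integral_neg']; exact lt_add_of_pos_right _ Nat.one_div_pos_of_nat)
  filter_upwards [hup, hlow] with ω hup hlow
  refine tendsto_order.2 ⟨fun a ha => ?_, fun b hb => ?_⟩
  · obtain ⟨k, hk⟩ := exists_nat_one_div_lt (sub_pos.2 ha)
    filter_upwards [hlow k] with n hn
    simp only [birkhoffAverage_neg, Pi.neg_apply] at hn
    linarith
  · obtain ⟨k, hk⟩ := exists_nat_one_div_lt (sub_pos.2 hb)
    filter_upwards [hup k] with n hn
    linarith

end PointwiseErgodic

namespace Matrix

variable {R n : Type*} [CommSemiring R] [Fintype n] [DecidableEq n]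

theorem list_prod_map_range_vecMulVec (u v : ℕ → n → R) (N : ℕ) :
    ((List.range (N + 1)).map fun k => vecMulVec (u k) (v k)).prod
      = (∏ k ∈ Finset.range N, v k ⬝ᵥ u (k + 1)) • vecMulVec (u 0) (v N) := by
  induction N with
  | zero => simp
  | succ N ih =>
    rw [List.range_succ, List.map_append, List.prod_append, ih, List.map_singleton,
      List.prod_singleton, smul_mul_assoc, vecMulVec_mul_vecMulVec, vecMulVec_smul, smul_smul,
      Finset.prod_range_succ]

end Matrix

open Matrix

theorem matNorm_smul_vecMulVec {m n : Type*} [Fintype m] [Fintype n] (t : ℝ) (a : m → ℝ)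
    (b : n → ℝ) : matNorm (t • vecMulVec a b) = |t| * ((∑ i, |a i|) * ∑ j, |b j|) := by
  simp only [matNorm, Matrix.smul_apply, vecMulVec_apply, smul_eq_mul, abs_mul]
  rw [Finset.sum_mul_sum, Finset.mul_sum]
  simp_rw [Finset.mul_sum]

theorem log_matNorm_list_prod_vecMulVec_single {ι : Type*} [Fintype ι] [DecidableEq ι]
    (c : Matrix ι ι ℝ) (hc : ∀ i j, 0 < c i j) (a : ℕ → ι) (N : ℕ) :
    Real.log (matNorm ((List.range (N + 1)).map
        fun k => vecMulVec (cᵀ (a k)) (Pi.single (a k) 1)).prod)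
      = ∑ k ∈ Finset.range N, Real.log (c (a k) (a (k + 1))) + Real.log (∑ i, c i (a 0)) := by
  have hprod : 0 < ∏ k ∈ Finset.range N, c (a k) (a (k + 1)) :=
    Finset.prod_pos fun k _ => hc _ _
  have hsingle : ∑ j, |(Pi.single (a N) 1 : ι → ℝ) j| = 1 := by
    simp [Pi.single_apply, apply_ite]
  rw [list_prod_map_range_vecMulVec (fun k => cᵀ (a k)) (fun k => Pi.single (a k) 1),
    matNorm_smul_vecMulVec]
  simp only [single_dotProduct, one_mul, transpose_apply, hsingle, mul_one, abs_of_pos hprod,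
    abs_of_pos (hc _ _)]
  rw [Real.log_mul hprod.ne' (Finset.sum_pos (fun i _ => hc _ _) ⟨a 0, Finset.mem_univ _⟩).ne',
    Real.log_prod fun k _ => (hc _ _).ne']

theorem tendsto_add_div_succ {u : ℕ → ℝ} {L : ℝ} (hu : Tendsto (fun n => u n / n) atTop (𝓝 L))
    (b : ℝ) : Tendsto (fun n : ℕ => (u n + b) / (n + 1 : ℕ)) atTop (𝓝 L) := by
  have h := (hu.add (tendsto_const_div_atTop_nhds_zero_nat b)).mul
    (tendsto_natCast_div_add_atTop (1 : ℝ))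
  rw [add_zero, mul_one] at h
  refine h.congr' ((eventually_ne_atTop 0).mono fun n hn => ?_)
  have : (n : ℝ) ≠ 0 := Nat.cast_ne_zero.2 hn
  field_simp
  push_cast
  ring

theorem MeasureTheory.MeasurePreserving.integral_comp_comp_eq_sum {Ω α : Type*}
    [MeasurableSpace Ω] {μ : Measure Ω} [IsFiniteMeasure μ] [Fintype α] [MeasurableSpace α]
    [MeasurableSingletonClass α] {T : Ω → Ω} (hT : MeasurePreserving T μ μ) {X : Ω → α}
    (hX : Measurable X) (φ : α → ℝ) :
    ∫ ω, φ (X (T ω)) ∂μ = ∑ a, μ.real (X ⁻¹' {a}) * φ a := by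
  change ∫ ω, φ ((X ∘ T) ω) ∂μ = _
  rw [← integral_map (hX.comp hT.measurable).aemeasurable
      (measurable_of_finite φ).aestronglyMeasurable,
    ← Measure.map_map hX hT.measurable, hT.map_eq, integral_fintype .of_finite]
  simp [measureReal_def, Measure.map_apply hX (measurableSet_singleton _)]

theorem envPi_mul_envP_nonneg {s : Fin 2 → ℝ} (hs : ∀ i, s i ∈ Set.Ioc (0 : ℝ) 1) (i j : Fin 2) :
    0 ≤ envPi s i * envP s i j := by
  obtain ⟨hs0, hs0'⟩ := hs 0
  obtain ⟨hs1, hs1'⟩ := hs 1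
  have : 0 < s 0 + s 1 := by linarith
  fin_cases i <;> fin_cases j <;>
    simp only [envPi, envP, Fin.zero_eta, Fin.mk_one, cons_val_zero, cons_val_one, of_apply,
      cons_val', cons_val_fin_one] <;>
    exact mul_nonneg (by positivity) (by linarith)

theorem MeasureTheory.MeasurePreserving.integral_comp_envPair {Ω : Type*} [MeasurableSpace Ω]
    {μ : Measure Ω} [IsFiniteMeasure μ] {T : Ω → Ω} (hT : MeasurePreserving T μ μ)
    {e : Ω → Fin 2} (he : Measurable e) {s : Fin 2 → ℝ} (hs : ∀ i, s i ∈ Set.Ioc (0 : ℝ) 1)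
    (henv : ∀ i j : Fin 2, μ {ω | e ω = i ∧ e (T ω) = j}
      = ENNReal.ofReal (envPi s i * envP s i j))
    (φ : Fin 2 × Fin 2 → ℝ) :
    ∫ ω, φ (e (T ω), e (T (T ω))) ∂μ = ∑ i, ∑ j, envPi s i * envP s i j * φ (i, j) := by
  set X : Ω → Fin 2 × Fin 2 := fun ω => (e ω, e (T ω))
  have hX : Measurable X := he.prodMk (he.comp hT.measurable)
  change ∫ ω, φ (X (T ω)) ∂μ = _
  rw [hT.integral_comp_comp_eq_sum hX, Fintype.sum_prod_type]
  refine Finset.sum_congr rfl fun i _ => Finset.sum_congr rfl fun j _ => ?_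
  rw [measureReal_def, show X ⁻¹' {(i, j)} = {ω | e ω = i ∧ e (T ω) = j} by ext; simp [X],
    henv, ENNReal.toReal_ofReal (envPi_mul_envP_nonneg hs i j)]

theorem sum_envPi_mul_envP_mul_log (s : Fin 2 → ℝ) (hs : s 0 + s 1 ≠ 0)
    (c : Matrix (Fin 2) (Fin 2) ℝ) (hc : ∀ i j, 0 < c i j) :
    ∑ i, ∑ j, envPi s i * envP s i j * Real.log (c i j)
      = (s 1 * Real.log (c 0 0) + s 0 * Real.log (c 1 1)
        + s 0 * s 1 * Real.log (c 0 1 * c 1 0 / (c 0 0 * c 1 1))) / (s 0 + s 1) := by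
  rw [Real.log_div (mul_pos (hc 0 1) (hc 1 0)).ne' (mul_pos (hc 0 0) (hc 1 1)).ne',
    Real.log_mul (hc 0 1).ne' (hc 1 0).ne', Real.log_mul (hc 0 0).ne' (hc 1 1).ne']
  simp only [Fin.sum_univ_two, envPi, envP, cons_val_zero, cons_val_one, of_apply, cons_val',
    empty_val', cons_val_fin_one]
  field_simp
  ring

theorem responsive_switcher_lyapunov_general
    {Ω : Type*} [MeasurableSpace Ω] (μ : Measure Ω) [IsProbabilityMeasure μ]
    (T : Ω → Ω) (hT : Ergodic T μ) (e : Ω → Fin 2) (he : Measurable e)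
    (s : Fin 2 → ℝ) (hs : ∀ i, s i ∈ Set.Ioc (0 : ℝ) 1)
    (henv : ∀ i j : Fin 2, μ {ω | e ω = i ∧ e (T ω) = j}
      = ENNReal.ofReal (envPi s i * envP s i j))
    (m1 m2 : ℝ) (hm1 : 0 < m1) (hm2 : 0 < m2)
    (d1 d2 : ℝ) (hd1 : d1 ∈ Set.Ico (0 : ℝ) 1) (hd2 : d2 ∈ Set.Ico (0 : ℝ) 1)
    (M : Fin 2 → Matrix (Fin 2) (Fin 2) ℝ)
    (hM : M = ![!![m1, 0; 1 - d1, 0], !![0, m2; 0, 1 - d2]]) :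
    ∀ᵐ ω ∂μ, Tendsto (fun n : ℕ =>
        Real.log (matNorm (((List.range n).map (fun k => M (e (T^[k+1] ω)))).prod)) / n)
      atTop (𝓝 ((s 1 * Real.log m1 + s 0 * Real.log (1 - d2)
        + s 0 * s 1 * Real.log (m2 * (1 - d1) / (m1 * (1 - d2)))) / (s 0 + s 1))) := by
  set c : Matrix (Fin 2) (Fin 2) ℝ := !![m1, m2; 1 - d1, 1 - d2]
  have hc : ∀ i j, 0 < c i j := by
    simp [Fin.forall_fin_two, c, hm1, hm2, hd1.2, hd2.2]
  have hMc : M = fun i => vecMulVec (cᵀ i) (Pi.single i 1) := by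
    subst hM
    ext i j k
    fin_cases i <;> fin_cases j <;> fin_cases k <;> simp [c, vecMulVec_apply]
  set φ : Fin 2 × Fin 2 → ℝ := fun p => Real.log (c p.1 p.2)
  have hX : Measurable fun ω => (e (T ω), e (T (T ω))) :=
    (he.comp hT.measurable).prodMk (he.comp (hT.measurable.comp hT.measurable))
  have hmean : ∫ ω, φ (e (T ω), e (T (T ω))) ∂μ = (s 1 * Real.log m1 + s 0 * Real.log (1 - d2)
      + s 0 * s 1 * Real.log (m2 * (1 - d1) / (m1 * (1 - d2)))) / (s 0 + s 1) :=
    (hT.integral_comp_envPair he hs henv φ).trans <|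
      (sum_envPi_mul_envP_mul_log s (by linarith [(hs 0).1, (hs 1).1]) c hc).trans (by simp [c])
  have hφm : Measurable fun ω => φ (e (T ω), e (T (T ω))) := (measurable_of_finite φ).comp hX
  have hφi : Integrable (fun ω => φ (e (T ω), e (T (T ω)))) μ :=
    (Integrable.of_finite (f := φ)).comp_measurable hX
  filter_upwards [hT.ae_tendsto_birkhoffAverage hφm hφi] with ω hω
  rw [hmean] at hω
  rw [← tendsto_add_atTop_iff_nat 1]
  refine (tendsto_add_div_succ (by simpa [birkhoffAverage, div_eq_inv_mul] using hω)
    (Real.log (∑ i, c i (e (T ω))))).congr fun n => ?_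
  rw [hMc, log_matNorm_list_prod_vecMulVec_single c hc (fun k => e (T^[k + 1] ω))]
  simp [birkhoffSum, φ, Function.iterate_succ_apply']

/-- Lyapunov exponent of the responsive switcher. -/
theorem responsive_switcher_lyapunov
    {Ω : Type*} [MeasurableSpace Ω] (μ : Measure Ω) [IsProbabilityMeasure μ]
    (T : Ω → Ω) (hT : Ergodic T μ) (e : Ω → Fin 2) (he : Measurable e)
    (s : Fin 2 → ℝ) (hs : ∀ i, s i ∈ Set.Ioc (0 : ℝ) 1) (hss : s 0 * s 1 < 1)
    (henv : ∀ i j : Fin 2, μ {ω | e ω = i ∧ e (T ω) = j}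
      = ENNReal.ofReal (envPi s i * envP s i j))
    (m1 m2 : ℝ) (hm1 : 0 < m1) (hm2 : 0 < m2)
    (d1 d2 : ℝ) (hd1 : d1 ∈ Set.Ico (0 : ℝ) 1) (hd2 : d2 ∈ Set.Ico (0 : ℝ) 1)
    (M : Fin 2 → Matrix (Fin 2) (Fin 2) ℝ)
    (hM : M = ![!![m1, 0; 1 - d1, 0], !![0, m2; 0, 1 - d2]]) :
    ∀ᵐ ω ∂μ, Tendsto (fun n : ℕ =>
        Real.log (matNorm (((List.range n).map (fun k => M (e (T^[k+1] ω)))).prod)) / n)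
      atTop (𝓝 ((s 1 * Real.log m1 + s 0 * Real.log (1 - d2)
        + s 0 * s 1 * Real.log (m2 * (1 - d1) / (m1 * (1 - d2)))) / (s 0 + s 1))) :=
  responsive_switcher_lyapunov_general μ T hT e he s hs henv m1 m2 hm1 hm2 d1 d2 hd1 hd2 M hM
end

section
/- Let (Ω, 𝓕, ℙ) be a probability space, T : Ω → Ω an ergodic measure-preserving map, p ≥ 1, and ℓ¹, ℓ², r¹, r² : Ω → (0,∞)^p measurable maps with log‖ℓⁱ‖₁ and log‖rⁱ‖₁ in L¹(ℙ) for i ∈ {1,2}. Define the p×p matrices M_k(ω) := ℓ¹(T^{k−1}ω)·r¹(T^{k−1}ω)ᵀ + ℓ²(T^{k−1}ω)·r²(T^{k−1}ω)ᵀ, and the 2×2 matrices A_{k,k+1}(ω) whose (i,j) entry is ⟨rⁱ(T^{k−1}ω), ℓʲ(T^{k}ω)⟩. Then, ℙ-almost surely, (1/n)·( log‖M_1(ω)·…·M_n(ω)‖ − log‖A_{1,2}(ω)·…·A_{n−1,n}(ω)‖ ) → 0 as n → ∞; in particular, the sequences (1/n)·log‖M_1·…·M_n‖ and (1/n)·log‖A_{1,2}·…·A_{n−1,n}‖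 have ℙ-a.s. the same limit superior and the same limit inferior. -/
open MeasureTheory Filter Topology
open scoped ENNReal

lemma tsum_meas_ge_le {Ω : Type*} [MeasurableSpace Ω] (μ : Measure Ω)
    {g : Ω → ℝ} (hg : Measurable g) (hint : Integrable g μ) {ε : ℝ} (hε : 0 < ε) :
    ∑' k : ℕ, μ {x | ε * (k + 1) ≤ |g x|} ≠ ⊤ := by
  have hms : ∀ k : ℕ, MeasurableSet {x | ε * ((k : ℝ) + 1) ≤ |g x|} := fun k =>
    measurableSet_le measurable_const hg.abs
  have hpt : ∀ x : Ω, (∑' k : ℕ, ({y | ε * ((k : ℝ) + 1) ≤ |g y|}).indicator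
      (1 : Ω → ℝ≥0∞) x) ≤ ENNReal.ofReal (|g x| / ε) := by
    intro x
    have ha0 : (0:ℝ) ≤ |g x| := abs_nonneg _
    have hsum : (∑' k : ℕ, ({y | ε * ((k : ℝ) + 1) ≤ |g y|}).indicator
        (1 : Ω → ℝ≥0∞) x) = ∑ k ∈ Finset.range ⌊|g x| / ε⌋₊,
        ({y | ε * ((k : ℝ) + 1) ≤ |g y|}).indicator (1 : Ω → ℝ≥0∞) x := by
      refine tsum_eq_sum fun k hk => ?_
      rw [Set.indicator_apply_eq_zero]
      intro hx
      exfalso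
      apply hk
      rw [Finset.mem_range]
      have h1 : (k + 1 : ℝ) ≤ |g x| / ε := by
        rw [le_div_iff₀ hε]
        have := hx.out
        linarith
      have h2 : (k + 1 : ℕ) ≤ ⌊|g x| / ε⌋₊ := Nat.le_floor (by push_cast; linarith)
      omega
    rw [hsum]
    calc (∑ k ∈ Finset.range ⌊|g x| / ε⌋₊,
        ({y | ε * ((k : ℝ) + 1) ≤ |g y|}).indicator (1 : Ω → ℝ≥0∞) x)
        ≤ ∑ _k ∈ Finset.range ⌊|g x| / ε⌋₊, 1 :=
          Finset.sum_le_sum fun k _ => Set.indicator_le_self' (fun _ _ => zero_le_one) x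
      _ = (⌊|g x| / ε⌋₊ : ℝ≥0∞) := by simp
      _ ≤ ENNReal.ofReal (|g x| / ε) := by
          rw [← ENNReal.ofReal_natCast]
          exact ENNReal.ofReal_le_ofReal (Nat.floor_le (by positivity))
  have key : ∑' k : ℕ, μ {x | ε * ((k : ℝ) + 1) ≤ |g x|}
      ≤ ∫⁻ x, ENNReal.ofReal (|g x| / ε) ∂μ := by
    calc ∑' k : ℕ, μ {x | ε * ((k : ℝ) + 1) ≤ |g x|}
        = ∑' k : ℕ, ∫⁻ x, ({y | ε * ((k : ℝ) + 1) ≤ |g y|}).indicator 1 x ∂μ := by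
          simp_rw [lintegral_indicator_one (hms _)]
      _ = ∫⁻ x, ∑' k : ℕ, ({y | ε * ((k : ℝ) + 1) ≤ |g y|}).indicator 1 x ∂μ := by
          rw [lintegral_tsum fun k => ((measurable_one.indicator (hms k)).aemeasurable)]
      _ ≤ ∫⁻ x, ENNReal.ofReal (|g x| / ε) ∂μ := lintegral_mono hpt
  have hfin : ∫⁻ x, ENNReal.ofReal (|g x| / ε) ∂μ ≠ ⊤ := by
    have heq : ∀ x, ENNReal.ofReal (|g x| / ε)
        = ENNReal.ofReal |g x| * ENNReal.ofReal ε⁻¹ := by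
      intro x; rw [div_eq_mul_inv, ENNReal.ofReal_mul (abs_nonneg _)]
    simp_rw [heq]
    rw [lintegral_mul_const _ hg.abs.ennreal_ofReal]
    have h1 : ∫⁻ x, ENNReal.ofReal |g x| ∂μ < ⊤ := by
      have := (hasFiniteIntegral_iff_norm g).1 hint.2
      simpa [Real.norm_eq_abs] using this
    exact (ENNReal.mul_lt_top h1 ENNReal.ofReal_lt_top).ne
  exact (key.trans_lt (lt_top_iff_ne_top.2 hfin)).ne

lemma ae_tendsto_iterate_div {Ω : Type*} [MeasurableSpace Ω] (μ : Measure Ω)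
    [IsProbabilityMeasure μ] {T : Ω → Ω} (hT : MeasurePreserving T μ μ)
    {g : Ω → ℝ} (hg : Measurable g) (hint : Integrable g μ) :
    ∀ᵐ ω ∂μ, Tendsto (fun n : ℕ => g (T^[n - 1] ω) / n) atTop (𝓝 0) := by
  have main : ∀ m : ℕ, ∀ᵐ ω ∂μ, ∀ᶠ k in atTop,
      |g (T^[k] ω)| ≤ (1 / (m + 1 : ℝ)) * k := by
    intro m
    have hε0 : (0:ℝ) < 1 / (m + 1 : ℝ) := by positivity
    have hsum : ∑' k : ℕ, μ {x | (1 / (m + 1 : ℝ)) * k ≤ |g (T^[k] x)|} ≠ ⊤ := by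
      have heq : ∀ k : ℕ, μ {x | (1 / (m + 1 : ℝ)) * k ≤ |g (T^[k] x)|}
          = μ {x | (1 / (m + 1 : ℝ)) * k ≤ |g x|} := by
        intro k
        have hset : {x | (1 / (m + 1 : ℝ)) * k ≤ |g (T^[k] x)|}
            = T^[k] ⁻¹' {x | (1 / (m + 1 : ℝ)) * k ≤ |g x|} := rfl
        rw [hset, (hT.iterate k).measure_preimage
          (measurableSet_le measurable_const hg.abs).nullMeasurableSet]
      simp_rw [heq]
      rw [tsum_eq_zero_add' ENNReal.summable]
      refine ENNReal.add_ne_top.2 ⟨(measure_lt_top μ _).ne, ?_⟩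
      have h2 := tsum_meas_ge_le μ hg hint hε0
      simpa only [Nat.cast_add, Nat.cast_one] using h2
    have h0 := measure_setOf_frequently_eq_zero hsum
    have h1 : ∀ᵐ ω ∂μ, ∀ᶠ k in atTop, ¬ ((1 / (m + 1 : ℝ)) * k ≤ |g (T^[k] ω)|) := by
      rw [ae_iff]
      exact h0
    filter_upwards [h1] with ω hω
    filter_upwards [hω] with k hk
    exact (not_le.1 hk).le
  rw [← ae_all_iff] at main
  filter_upwards [main] with ω hω
  rw [NormedAddCommGroup.tendsto_nhds_zero]
  intro ε hε
  obtain ⟨m, hm⟩ := exists_nat_one_div_lt hε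
  obtain ⟨N, hN⟩ := eventually_atTop.1 (hω m)
  refine eventually_atTop.2 ⟨N + 1, fun n hn => ?_⟩
  have hn1 : 1 ≤ n := by omega
  have hnpos : (0:ℝ) < n := by exact_mod_cast hn1
  have hk := hN (n - 1) (by omega)
  have hcast : ((n - 1 : ℕ) : ℝ) ≤ (n : ℝ) := by
    exact_mod_cast Nat.sub_le n 1
  have hbound : |g (T^[n-1] ω)| ≤ (1 / (m + 1 : ℝ)) * n :=
    hk.trans (mul_le_mul_of_nonneg_left hcast (by positivity))
  have : ‖g (T^[n-1] ω) / n‖ = |g (T^[n-1] ω)| / n := by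
    rw [Real.norm_eq_abs, abs_div, Nat.abs_cast]
  rw [this]
  calc |g (T^[n-1] ω)| / n ≤ ((1 / (m + 1 : ℝ)) * n) / n := by gcongr
    _ = 1 / (m + 1 : ℝ) := by field_simp
    _ < ε := hm


lemma ereal_limsup_le_of_sub {u v : ℕ → ℝ}
    (h : Tendsto (fun n => u n - v n) atTop (𝓝 0)) :
    limsup (fun n => ((u n : EReal))) atTop ≤ limsup (fun n => ((v n : EReal))) atTop := by
  have he : Tendsto (fun n => ((u n - v n : ℝ) : EReal)) atTop (𝓝 ((0:ℝ) : EReal)) :=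
    EReal.tendsto_coe.2 h
  have hle : limsup (fun n => ((u n - v n : ℝ) : EReal)) atTop = ((0:ℝ) : EReal) :=
    he.limsup_eq
  have hfun : (fun n => ((u n : EReal)))
      = (fun n => ((v n : EReal))) + (fun n => ((u n - v n : ℝ) : EReal)) := by
    funext n
    simp only [Pi.add_apply, ← EReal.coe_add]
    norm_num
  rw [hfun]
  calc limsup ((fun n => ((v n : EReal))) + (fun n => ((u n - v n : ℝ) : EReal))) atTop
      ≤ limsup (fun n => ((v n : EReal))) atTop
        + limsup (fun n => ((u n - v n : ℝ) : EReal)) atTop := by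
        refine EReal.limsup_add_le (Or.inr ?_) (Or.inr ?_) <;> rw [hle] <;> simp
    _ = limsup (fun n => ((v n : EReal))) atTop := by rw [hle]; simp

lemma ereal_liminf_le_of_sub {u v : ℕ → ℝ}
    (h : Tendsto (fun n => u n - v n) atTop (𝓝 0)) :
    liminf (fun n => ((v n : EReal))) atTop ≤ liminf (fun n => ((u n : EReal))) atTop := by
  have he : Tendsto (fun n => ((u n - v n : ℝ) : EReal)) atTop (𝓝 ((0:ℝ) : EReal)) :=
    EReal.tendsto_coe.2 h
  have hle : liminf (fun n => ((u n - v n : ℝ) : EReal)) atTop = ((0:ℝ) : EReal) :=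
    he.liminf_eq
  have hfun : (fun n => ((u n : EReal)))
      = (fun n => ((v n : EReal))) + (fun n => ((u n - v n : ℝ) : EReal)) := by
    funext n
    simp only [Pi.add_apply, ← EReal.coe_add]
    norm_num
  calc liminf (fun n => ((v n : EReal))) atTop
      = liminf (fun n => ((v n : EReal))) atTop
        + liminf (fun n => ((u n - v n : ℝ) : EReal)) atTop := by rw [hle]; simp
    _ ≤ liminf ((fun n => ((v n : EReal))) + (fun n => ((u n - v n : ℝ) : EReal))) atTop :=
        EReal.le_liminf_add
    _ = liminf (fun n => ((u n : EReal))) atTop := by rw [← hfun]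

lemma ereal_sub_tendsto_limsup_liminf {u v : ℕ → ℝ}
    (h : Tendsto (fun n => u n - v n) atTop (𝓝 0)) :
    limsup (fun n => ((u n : EReal))) atTop = limsup (fun n => ((v n : EReal))) atTop
    ∧ liminf (fun n => ((u n : EReal))) atTop = liminf (fun n => ((v n : EReal))) atTop := by
  have h' : Tendsto (fun n => v n - u n) atTop (𝓝 0) := by
    have := h.neg
    simpa [neg_sub] using this
  exact ⟨le_antisymm (ereal_limsup_le_of_sub h) (ereal_limsup_le_of_sub h'),
    le_antisymm (ereal_liminf_le_of_sub h') (ereal_liminf_le_of_sub h)⟩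

noncomputable def Mmat {p : ℕ} (L R : ℕ → Fin 2 → Fin p → ℝ) (k : ℕ) :
    Matrix (Fin p) (Fin p) ℝ := Matrix.of fun a b => ∑ i, L k i a * R k i b

noncomputable def Amat {p : ℕ} (L R : ℕ → Fin 2 → Fin p → ℝ) (k : ℕ) :
    Matrix (Fin 2) (Fin 2) ℝ := Matrix.of fun i j => ∑ t, R k i t * L (k + 1) j t

lemma prod_eq {p : ℕ} (L R : ℕ → Fin 2 → Fin p → ℝ) (n : ℕ) :
    ((List.range (n + 1)).map (Mmat L R)).prod
    = Matrix.of fun a b => ∑ i, ∑ j,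
        L 0 i a * (((List.range n).map (Amat L R)).prod i j) * R n j b := by
  induction n with
  | zero =>
    ext a b
    simp [Mmat, Matrix.one_apply, mul_ite, ite_mul, Finset.sum_ite_eq, List.range_succ,
      Fin.sum_univ_two]
  | succ n ih =>
    rw [List.range_succ, List.map_append, List.prod_append, ih]
    ext a b
    rw [List.range_succ (n := n), List.map_append, List.prod_append]
    simp only [List.map_cons, List.map_nil, List.prod_cons, List.prod_nil, mul_one,
      Matrix.mul_apply, Matrix.of_apply, Mmat, Amat]
    -- LHS: ∑ c, (∑ i, ∑ j, L 0 i a * P i j * R n j c) * (∑ t, L (n+1) t c * R (n+1) t b)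
    -- RHS: ∑ i, ∑ t, L 0 i a * (∑ j, P i j * (∑ s, R n j s * L (n+1) t s)) * R (n+1) t b
    simp only [Finset.sum_mul, Finset.mul_sum]
    rw [Finset.sum_comm]
    refine Eq.trans (Finset.sum_congr rfl fun t _ => Eq.trans Finset.sum_comm
      (Finset.sum_congr rfl fun i _ => Finset.sum_comm)) ?_
    rw [Finset.sum_comm]
    exact Finset.sum_congr rfl fun i _ => Finset.sum_congr rfl fun t _ =>
      Finset.sum_congr rfl fun j _ => Finset.sum_congr rfl fun c _ => by ring

lemma prodA_nonneg_row {p : ℕ} (L R : ℕ → Fin 2 → Fin p → ℝ)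
    (hp : 1 ≤ p) (hL : ∀ k i t, 0 < L k i t) (hR : ∀ k i t, 0 < R k i t) (m : ℕ) :
    (∀ i j, 0 ≤ ((List.range m).map (Amat L R)).prod i j)
    ∧ (∀ i, ∃ j, 0 < ((List.range m).map (Amat L R)).prod i j) := by
  haveI : Nonempty (Fin p) := Fin.pos_iff_nonempty.1 hp
  have hA : ∀ k i j, 0 < Amat L R k i j := fun k i j =>
    Finset.sum_pos (fun t _ => mul_pos (hR k i t) (hL (k+1) j t)) Finset.univ_nonempty
  induction m with
  | zero =>
    constructor
    · intro i j
      simp only [List.range_zero, List.map_nil, List.prod_nil]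
      rcases eq_or_ne i j with h | h
      · simp [Matrix.one_apply, h]
      · simp [Matrix.one_apply, h]
    · intro i
      exact ⟨i, by simp [Matrix.one_apply]⟩
  | succ m ih =>
    have hsplit : ((List.range (m+1)).map (Amat L R)).prod
        = ((List.range m).map (Amat L R)).prod * Amat L R m := by
      rw [List.range_succ, List.map_append, List.prod_append]
      simp
    obtain ⟨ihn, ihr⟩ := ih
    constructor
    · intro i j
      rw [hsplit, Matrix.mul_apply]
      exact Finset.sum_nonneg fun k _ => mul_nonneg (ihn i k) (hA m k j).le
    · intro i
      obtain ⟨j0, hj0⟩ := ihr i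
      refine ⟨0, ?_⟩
      rw [hsplit, Matrix.mul_apply]
      exact Finset.sum_pos' (fun k _ => mul_nonneg (ihn i k) (hA m k 0).le)
        ⟨j0, Finset.mem_univ _, mul_pos hj0 (hA m j0 0)⟩

lemma matNorm_prodA_pos {p : ℕ} (L R : ℕ → Fin 2 → Fin p → ℝ)
    (hp : 1 ≤ p) (hL : ∀ k i t, 0 < L k i t) (hR : ∀ k i t, 0 < R k i t) (m : ℕ) :
    0 < matNorm (((List.range m).map (Amat L R)).prod) := by
  obtain ⟨hnn, hrow⟩ := prodA_nonneg_row L R hp hL hR m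
  obtain ⟨j0, hj0⟩ := hrow 0
  rw [matNorm]
  refine Finset.sum_pos' (fun i _ => Finset.sum_nonneg fun j _ => abs_nonneg _) ?_
  refine ⟨0, Finset.mem_univ _, ?_⟩
  refine Finset.sum_pos' (fun j _ => abs_nonneg _) ⟨j0, Finset.mem_univ _, ?_⟩
  rwa [abs_of_nonneg (hnn 0 j0)]

lemma matNorm_prodM_eq {p : ℕ} (L R : ℕ → Fin 2 → Fin p → ℝ)
    (hp : 1 ≤ p) (hL : ∀ k i t, 0 < L k i t) (hR : ∀ k i t, 0 < R k i t) (n : ℕ) :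
    matNorm (((List.range (n+1)).map (Mmat L R)).prod)
    = ∑ i, ∑ j, (∑ a, L 0 i a) * (((List.range n).map (Amat L R)).prod i j)
        * (∑ b, R n j b) := by
  obtain ⟨hnn, _⟩ := prodA_nonneg_row L R hp hL hR n
  rw [_root_.prod_eq, matNorm]
  have habs : ∀ a b : Fin p, |∑ i, ∑ j,
      L 0 i a * (((List.range n).map (Amat L R)).prod i j) * R n j b|
      = ∑ i, ∑ j, L 0 i a * (((List.range n).map (Amat L R)).prod i j) * R n j b := by
    intro a b
    refine abs_of_nonneg (Finset.sum_nonneg fun i _ => Finset.sum_nonneg fun j _ => ?_)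
    exact mul_nonneg (mul_nonneg (hL 0 i a).le (hnn i j)) (hR n j b).le
  simp only [Matrix.of_apply, habs]
  simp only [Finset.sum_mul, Finset.mul_sum]
  refine Eq.trans (Finset.sum_congr rfl fun a _ => Eq.trans Finset.sum_comm
    (Finset.sum_congr rfl fun i _ => Finset.sum_comm)) ?_
  rw [Finset.sum_comm]
  refine Finset.sum_congr rfl fun i _ => Eq.trans Finset.sum_comm ?_
  exact Finset.sum_congr rfl fun j _ => Eq.trans Finset.sum_comm <|
    Finset.sum_congr rfl fun a _ => Finset.sum_congr rfl fun b _ => by ring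

set_option maxHeartbeats 1000000 in
lemma det_main {p : ℕ} (hp : 1 ≤ p) (L R : ℕ → Fin 2 → Fin p → ℝ)
    (hL : ∀ k i t, 0 < L k i t) (hR : ∀ k i t, 0 < R k i t)
    (hg : ∀ i : Fin 2, Tendsto
      (fun n : ℕ => Real.log (∑ t, R (n-1) i t) / n) atTop (𝓝 0)) :
    Tendsto (fun n : ℕ => (Real.log (matNorm (((List.range n).map (Mmat L R)).prod))
      - Real.log (matNorm (((List.range (n-1)).map (Amat L R)).prod))) / n)
      atTop (𝓝 0) := by
  haveI : Nonempty (Fin p) := Fin.pos_iff_nonempty.1 hp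
  set SL : Fin 2 → ℝ := fun i => ∑ a, L 0 i a with hSL
  set SR : ℕ → Fin 2 → ℝ := fun m j => ∑ b, R m j b with hSR
  have hSLpos : ∀ i, 0 < SL i := fun i =>
    Finset.sum_pos (fun a _ => hL 0 i a) Finset.univ_nonempty
  have hSRpos : ∀ m j, 0 < SR m j := fun m j =>
    Finset.sum_pos (fun b _ => hR m j b) Finset.univ_nonempty
  set cL : ℝ := min (SL 0) (SL 1) with hcL
  set CL : ℝ := max (SL 0) (SL 1) with hCL
  have hcLpos : 0 < cL := lt_min (hSLpos 0) (hSLpos 1)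
  have hCLpos : 0 < CL := hcLpos.trans_le (min_le_max)
  have hcLle : ∀ i, cL ≤ SL i := by
    intro i; fin_cases i; exacts [min_le_left _ _, min_le_right _ _]
  have hCLle : ∀ i, SL i ≤ CL := by
    intro i; fin_cases i; exacts [le_max_left _ _, le_max_right _ _]
  set Kc : ℝ := |Real.log cL| + |Real.log CL| with hKc
  have key : ∀ m : ℕ,
      |Real.log (matNorm (((List.range (m+1)).map (Mmat L R)).prod))
        - Real.log (matNorm (((List.range m).map (Amat L R)).prod))|
      ≤ Kc + (|Real.log (SR m 0)| + |Real.log (SR m 1)|) := by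
    intro m
    obtain ⟨hnn, -⟩ := prodA_nonneg_row L R hp hL hR m
    set P : Matrix (Fin 2) (Fin 2) ℝ := ((List.range m).map (Amat L R)).prod with hPdef
    set cR : ℝ := min (SR m 0) (SR m 1) with hcR
    set CR : ℝ := max (SR m 0) (SR m 1) with hCR
    have hcRpos : 0 < cR := lt_min (hSRpos m 0) (hSRpos m 1)
    have hCRpos : 0 < CR := hcRpos.trans_le min_le_max
    have hcRle : ∀ j, cR ≤ SR m j := by
      intro j; fin_cases j; exacts [min_le_left _ _, min_le_right _ _]
    have hCRle : ∀ j, SR m j ≤ CR := by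
      intro j; fin_cases j; exacts [le_max_left _ _, le_max_right _ _]
    have hPN : matNorm P = ∑ i, ∑ j, P i j := by
      rw [matNorm]
      exact Finset.sum_congr rfl fun i _ => Finset.sum_congr rfl fun j _ =>
        abs_of_nonneg (hnn i j)
    have hPNpos : 0 < matNorm P := matNorm_prodA_pos L R hp hL hR m
    have hMN : matNorm (((List.range (m+1)).map (Mmat L R)).prod)
        = ∑ i, ∑ j, SL i * P i j * SR m j := matNorm_prodM_eq L R hp hL hR m
    have hlow : cL * cR * matNorm P
        ≤ matNorm (((List.range (m+1)).map (Mmat L R)).prod) := by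
      rw [hMN, hPN, Finset.mul_sum]
      refine Finset.sum_le_sum fun i _ => ?_
      rw [Finset.mul_sum]
      refine Finset.sum_le_sum fun j _ => ?_
      have h1 : cL * cR ≤ SL i * SR m j :=
        mul_le_mul (hcLle i) (hcRle j) hcRpos.le (hSLpos i).le
      calc cL * cR * P i j ≤ (SL i * SR m j) * P i j :=
            mul_le_mul_of_nonneg_right h1 (hnn i j)
        _ = SL i * P i j * SR m j := by ring
    have hup : matNorm (((List.range (m+1)).map (Mmat L R)).prod)
        ≤ CL * CR * matNorm P := by
      rw [hMN, hPN, Finset.mul_sum]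
      refine Finset.sum_le_sum fun i _ => ?_
      rw [Finset.mul_sum]
      refine Finset.sum_le_sum fun j _ => ?_
      have h1 : SL i * SR m j ≤ CL * CR :=
        mul_le_mul (hCLle i) (hCRle j) (hSRpos m j).le hCLpos.le
      calc SL i * P i j * SR m j = (SL i * SR m j) * P i j := by ring
        _ ≤ (CL * CR) * P i j := mul_le_mul_of_nonneg_right h1 (hnn i j)
    have hMNpos : 0 < matNorm (((List.range (m+1)).map (Mmat L R)).prod) :=
      lt_of_lt_of_le (by positivity) hlow
    have hlog_low : Real.log cL + Real.log cR + Real.log (matNorm P)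
        ≤ Real.log (matNorm (((List.range (m+1)).map (Mmat L R)).prod)) := by
      have h2 := Real.log_le_log (by positivity) hlow
      rwa [Real.log_mul (by positivity) hPNpos.ne',
        Real.log_mul hcLpos.ne' hcRpos.ne'] at h2
    have hlog_up : Real.log (matNorm (((List.range (m+1)).map (Mmat L R)).prod))
        ≤ Real.log CL + Real.log CR + Real.log (matNorm P) := by
      have h2 := Real.log_le_log hMNpos hup
      rwa [Real.log_mul (by positivity) hPNpos.ne',
        Real.log_mul hCLpos.ne' hCRpos.ne'] at h2
    have hcRabs : |Real.log cR| ≤ |Real.log (SR m 0)| + |Real.log (SR m 1)| := by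
      rcases min_cases (SR m 0) (SR m 1) with ⟨h, -⟩ | ⟨h, -⟩ <;> rw [hcR, h]
      · exact le_add_of_nonneg_right (abs_nonneg _)
      · exact le_add_of_nonneg_left (abs_nonneg _)
    have hCRabs : |Real.log CR| ≤ |Real.log (SR m 0)| + |Real.log (SR m 1)| := by
      rcases max_cases (SR m 0) (SR m 1) with ⟨h, -⟩ | ⟨h, -⟩ <;> rw [hCR, h]
      · exact le_add_of_nonneg_right (abs_nonneg _)
      · exact le_add_of_nonneg_left (abs_nonneg _)
    rw [abs_le]
    constructor
    · have a1 := neg_abs_le (Real.log cL)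
      have a2 := neg_abs_le (Real.log cR)
      have a3 := abs_nonneg (Real.log CL)
      linarith
    · have a1 := le_abs_self (Real.log CL)
      have a2 := le_abs_self (Real.log CR)
      have a3 := abs_nonneg (Real.log cL)
      linarith
  have h1 : Tendsto (fun n : ℕ => |Real.log (SR (n-1) 0)| / n) atTop (𝓝 0) := by
    have := (hg 0).abs
    simpa [abs_div, Nat.abs_cast] using this
  have h2 : Tendsto (fun n : ℕ => |Real.log (SR (n-1) 1)| / n) atTop (𝓝 0) := by
    have := (hg 1).abs
    simpa [abs_div, Nat.abs_cast] using this
  have hB : Tendsto (fun n : ℕ =>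
      (Kc + (|Real.log (SR (n-1) 0)| + |Real.log (SR (n-1) 1)|)) / n) atTop (𝓝 0) := by
    have h3 := (tendsto_const_div_atTop_nhds_zero_nat Kc).add (h1.add h2)
    simp only [add_zero] at h3
    exact h3.congr fun n => by ring
  refine squeeze_zero_norm' ?_ hB
  filter_upwards [eventually_ge_atTop 1] with n hn
  obtain ⟨m, rfl⟩ : ∃ m, n = m + 1 := ⟨n - 1, by omega⟩
  simp only [Nat.add_sub_cancel]
  rw [Real.norm_eq_abs, abs_div, Nat.abs_cast]
  have hden : (0:ℝ) < ((m+1 : ℕ) : ℝ) := by positivity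
  gcongr
  exact key m

set_option maxHeartbeats 1600000 in
/-- Rank-two reduction: the normalized log-norms of the products of the p×p matrices
M_k and of the associated 2×2 matrices A_{k,k+1} are asymptotically equal,
ℙ-almost surely. -/
theorem rank_two_reduction
    {Ω : Type*} [MeasurableSpace Ω] (μ : Measure Ω) [IsProbabilityMeasure μ]
    (T : Ω → Ω) (hT : Ergodic T μ) (p : ℕ) (hp : 1 ≤ p)
    (l r : Fin 2 → Ω → Fin p → ℝ)
    (hlmeas : ∀ i, Measurable (l i)) (hrmeas : ∀ i, Measurable (r i))
    (hl0 : ∀ i ω t, 0 < l i ω t) (hr0 : ∀ i ω t, 0 < r i ω t)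
    (hintl : ∀ i, Integrable (fun ω => Real.log (∑ t, l i ω t)) μ)
    (hintr : ∀ i, Integrable (fun ω => Real.log (∑ t, r i ω t)) μ) :
    ∀ᵐ ω ∂μ,
      (Tendsto (fun n : ℕ =>
        (Real.log (matNorm (((List.range n).map (fun k =>
            (Matrix.of fun i j => l 0 (T^[k] ω) i * r 0 (T^[k] ω) j
              + l 1 (T^[k] ω) i * r 1 (T^[k] ω) j : Matrix (Fin p) (Fin p) ℝ))).prod))
          - Real.log (matNorm (((List.range (n - 1)).map (fun k =>
            (Matrix.of fun i j => ∑ t, r i (T^[k] ω) t * l j (T^[k+1] ω) t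
              : Matrix (Fin 2) (Fin 2) ℝ))).prod))) / n)
        atTop (𝓝 0))
      ∧ Filter.limsup (fun n : ℕ =>
          ((Real.log (matNorm (((List.range n).map (fun k =>
            (Matrix.of fun i j => l 0 (T^[k] ω) i * r 0 (T^[k] ω) j
              + l 1 (T^[k] ω) i * r 1 (T^[k] ω) j : Matrix (Fin p) (Fin p) ℝ))).prod)) / n : ℝ)
            : EReal)) atTop
        = Filter.limsup (fun n : ℕ =>
          ((Real.log (matNorm (((List.range (n - 1)).map (fun k =>
            (Matrix.of fun i j => ∑ t, r i (T^[k] ω) t * l j (T^[k+1] ω) t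
              : Matrix (Fin 2) (Fin 2) ℝ))).prod)) / n : ℝ) : EReal)) atTop
      ∧ Filter.liminf (fun n : ℕ =>
          ((Real.log (matNorm (((List.range n).map (fun k =>
            (Matrix.of fun i j => l 0 (T^[k] ω) i * r 0 (T^[k] ω) j
              + l 1 (T^[k] ω) i * r 1 (T^[k] ω) j : Matrix (Fin p) (Fin p) ℝ))).prod)) / n : ℝ)
            : EReal)) atTop
        = Filter.liminf (fun n : ℕ =>
          ((Real.log (matNorm (((List.range (n - 1)).map (fun k =>
            (Matrix.of fun i j => ∑ t, r i (T^[k] ω) t * l j (T^[k+1] ω) t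
              : Matrix (Fin 2) (Fin 2) ℝ))).prod)) / n : ℝ) : EReal)) atTop := by
  have hgmeas : ∀ i : Fin 2, Measurable (fun ω => Real.log (∑ t, r i ω t)) := by
    intro i
    exact Real.measurable_log.comp
      (Finset.measurable_sum Finset.univ fun t _ => (measurable_pi_apply t).comp (hrmeas i))
  have hae : ∀ᵐ ω ∂μ, ∀ i : Fin 2,
      Tendsto (fun n : ℕ => Real.log (∑ t, r i (T^[n-1] ω) t) / n) atTop (𝓝 0) := by
    rw [ae_all_iff]
    intro i
    have h2 := ae_tendsto_iterate_div μ hT.toMeasurePreserving (hgmeas i) (hintr i)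
    exact h2
  filter_upwards [hae] with ω hω
  set L : ℕ → Fin 2 → Fin p → ℝ := fun k i => l i (T^[k] ω) with hLdef
  set R : ℕ → Fin 2 → Fin p → ℝ := fun k i => r i (T^[k] ω) with hRdef
  have hdet := det_main hp L R (fun k i t => hl0 i _ t) (fun k i t => hr0 i _ t)
    (fun i => hω i)
  have hM : (fun k => (Matrix.of fun i j => l 0 (T^[k] ω) i * r 0 (T^[k] ω) j
      + l 1 (T^[k] ω) i * r 1 (T^[k] ω) j : Matrix (Fin p) (Fin p) ℝ)) = Mmat L R := by
    funext k
    ext a b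
    simp [Mmat, Fin.sum_univ_two, hLdef, hRdef]
  have hA : (fun k => (Matrix.of fun i j => ∑ t, r i (T^[k] ω) t * l j (T^[k+1] ω) t
      : Matrix (Fin 2) (Fin 2) ℝ)) = Amat L R := by
    funext k
    ext i j
    simp [Amat, hLdef, hRdef]
  rw [hM, hA]
  have hsub : Tendsto (fun n : ℕ =>
      Real.log (matNorm (((List.range n).map (Mmat L R)).prod)) / n
      - Real.log (matNorm (((List.range (n-1)).map (Amat L R)).prod)) / n)
      atTop (𝓝 0) :=
    hdet.congr fun n => sub_div _ _ _
  obtain ⟨hsup, hinf⟩ := ereal_sub_tendsto_limsup_liminf hsub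
  exact ⟨hdet, hsup, hinf⟩
end

section
/- For α ∈ (0,1) and s₁, s₂ ∈ (0,1] with s₁·s₂ < 1, define L_X := (s₂·log 4 + s₁·log(4α))/(s₁+s₂), L_res := (s₂·log 4 + s₁·log(4/5) + s₁s₂·log α)/(s₁+s₂), L_sto := (s₂·log(12/5) + s₁·log(2α + 2/5))/(s₁+s₂), and L_pre := (s₂·log(4/5) + s₁·log(4α) + s₁s₂·log(1/α))/(s₁+s₂). Then: (i) there exist α ∈ (0,1/4) and s₁, s₂ ∈ (0,1] with s₁s₂ < 1 such that L_res > 0 while L_X < 0, L_sto < 0 and L_pre < 0; (ii) there exist such (α, s₁, s₂) with L_sto > 0 while L_X < 0, L_res < 0 and L_pre < 0; (iii) there exist such (α, s₁, s₂) with L_pre > 0 while L_X < 0, L_res < 0 and L_sto < 0; (iv) there exist such (α, s₁, s₂) with L_X > 0 while L_res < 0, L_sto < 0 and L_pre < 0. -/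
/-- Lyapunov exponent of the 1-type (sleepless) process in the fair-comparison example. -/
noncomputable def LX (α s1 s2 : ℝ) : ℝ :=
  (s2 * Real.log 4 + s1 * Real.log (4 * α)) / (s1 + s2)

/-- Lyapunov exponent of the responsive switcher in the fair-comparison example. -/
noncomputable def Lres (α s1 s2 : ℝ) : ℝ :=
  (s2 * Real.log 4 + s1 * Real.log (4 / 5) + s1 * s2 * Real.log α) / (s1 + s2)

/-- Lyapunov exponent of the stochastic switcher in the fair-comparison example. -/
noncomputable def Lsto (α s1 s2 : ℝ) : ℝ :=
  (s2 * Real.log (12 / 5) + s1 * Real.log (2 * α + 2 / 5)) / (s1 + s2)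

/-- Lyapunov exponent of the prescient switcher in the fair-comparison example. -/
noncomputable def Lpre (α s1 s2 : ℝ) : ℝ :=
  (s2 * Real.log (4 / 5) + s1 * Real.log (4 * α) + s1 * s2 * Real.log (1 / α)) / (s1 + s2)

private lemma log_combo (A B C : ℝ) (hA : 0 < A) (hB : 0 < B) (hC : 0 < C) (m n p : ℕ) :
    Real.log (A ^ m * B ^ n * C ^ p)
      = (m : ℝ) * Real.log A + (n : ℝ) * Real.log B + (p : ℝ) * Real.log C := by
  rw [Real.log_mul (by positivity) (by positivity),
      Real.log_mul (by positivity) (by positivity),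
      Real.log_pow, Real.log_pow, Real.log_pow]

/-- Each of the four strategies can have a strong fitness advantage over the other three
(Theorem `thm:advantages-of-seedbanks` via Example `exps:strong-advantages`). -/
theorem strong_fitness_advantages :
    (∃ α s1 s2 : ℝ, α ∈ Set.Ioo (0 : ℝ) (1 / 4) ∧ s1 ∈ Set.Ioc (0 : ℝ) 1 ∧
      s2 ∈ Set.Ioc (0 : ℝ) 1 ∧ s1 * s2 < 1 ∧
      0 < Lres α s1 s2 ∧ LX α s1 s2 < 0 ∧ Lsto α s1 s2 < 0 ∧ Lpre α s1 s2 < 0)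
    ∧ (∃ α s1 s2 : ℝ, α ∈ Set.Ioo (0 : ℝ) (1 / 4) ∧ s1 ∈ Set.Ioc (0 : ℝ) 1 ∧
      s2 ∈ Set.Ioc (0 : ℝ) 1 ∧ s1 * s2 < 1 ∧
      0 < Lsto α s1 s2 ∧ LX α s1 s2 < 0 ∧ Lres α s1 s2 < 0 ∧ Lpre α s1 s2 < 0)
    ∧ (∃ α s1 s2 : ℝ, α ∈ Set.Ioo (0 : ℝ) (1 / 4) ∧ s1 ∈ Set.Ioc (0 : ℝ) 1 ∧
      s2 ∈ Set.Ioc (0 : ℝ) 1 ∧ s1 * s2 < 1 ∧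
      0 < Lpre α s1 s2 ∧ LX α s1 s2 < 0 ∧ Lres α s1 s2 < 0 ∧ Lsto α s1 s2 < 0)
    ∧ (∃ α s1 s2 : ℝ, α ∈ Set.Ioo (0 : ℝ) (1 / 4) ∧ s1 ∈ Set.Ioc (0 : ℝ) 1 ∧
      s2 ∈ Set.Ioc (0 : ℝ) 1 ∧ s1 * s2 < 1 ∧
      0 < LX α s1 s2 ∧ Lres α s1 s2 < 0 ∧ Lsto α s1 s2 < 0 ∧ Lpre α s1 s2 < 0) := by
  refine ⟨⟨1/16, 1/5, 1/10, by norm_num, by norm_num, by norm_num, by norm_num,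
      ?_, ?_, ?_, ?_⟩,
    ⟨1/64, 2/5, 5/8, by norm_num, by norm_num, by norm_num, by norm_num,
      ?_, ?_, ?_, ?_⟩,
    ⟨1/25, 1, 2/3, by norm_num, by norm_num, by norm_num, by norm_num,
      ?_, ?_, ?_, ?_⟩,
    ⟨1/5, 5/8, 1/8, by norm_num, by norm_num, by norm_num, by norm_num,
      ?_, ?_, ?_, ?_⟩⟩
  · have h := log_combo 4 (4/5) (1/16) (by norm_num) (by norm_num) (by norm_num) 5 10 1
    have h2 : (0:ℝ) < Real.log ((4:ℝ) ^ 5 * (4/5) ^ 10 * (1/16) ^ 1) :=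
      Real.log_pos (by norm_num)
    rw [h] at h2; unfold Lres
    refine div_pos ?_ (by norm_num)
    push_cast at h2; linarith
  · have h := log_combo 4 (4 * (1/16)) 1 (by norm_num) (by norm_num) (by norm_num) 5 10 0
    have h2 : Real.log ((4:ℝ) ^ 5 * (4 * (1/16)) ^ 10 * 1 ^ 0) < 0 :=
      Real.log_neg (by norm_num) (by norm_num)
    rw [h] at h2; unfold LX
    refine div_neg_of_neg_of_pos ?_ (by norm_num)
    push_cast at h2; linarith
  · have h := log_combo (12/5) (2 * (1/16) + 2/5) 1 (by norm_num) (by norm_num) (by norm_num) 5 10 0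
    have h2 : Real.log (((12/5):ℝ) ^ 5 * (2 * (1/16) + 2/5) ^ 10 * 1 ^ 0) < 0 :=
      Real.log_neg (by norm_num) (by norm_num)
    rw [h] at h2; unfold Lsto
    refine div_neg_of_neg_of_pos ?_ (by norm_num)
    push_cast at h2; linarith
  · have h := log_combo (4/5) (4 * (1/16)) (1/(1/16)) (by norm_num) (by norm_num) (by norm_num) 5 10 1
    have h2 : Real.log (((4/5):ℝ) ^ 5 * (4 * (1/16)) ^ 10 * (1/(1/16)) ^ 1) < 0 :=
      Real.log_neg (by norm_num) (by norm_num)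
    rw [h] at h2; unfold Lpre
    refine div_neg_of_neg_of_pos ?_ (by norm_num)
    push_cast at h2; linarith
  · have h := log_combo (12/5) (2 * (1/64) + 2/5) 1 (by norm_num) (by norm_num) (by norm_num) 25 16 0
    have h2 : (0:ℝ) < Real.log (((12/5):ℝ) ^ 25 * (2 * (1/64) + 2/5) ^ 16 * 1 ^ 0) :=
      Real.log_pos (by norm_num)
    rw [h] at h2; unfold Lsto
    refine div_pos ?_ (by norm_num)
    push_cast at h2; linarith
  · have h := log_combo 4 (4 * (1/64)) 1 (by norm_num) (by norm_num) (by norm_num) 25 16 0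
    have h2 : Real.log ((4:ℝ) ^ 25 * (4 * (1/64)) ^ 16 * 1 ^ 0) < 0 :=
      Real.log_neg (by norm_num) (by norm_num)
    rw [h] at h2; unfold LX
    refine div_neg_of_neg_of_pos ?_ (by norm_num)
    push_cast at h2; linarith
  · have h := log_combo 4 (4/5) (1/64) (by norm_num) (by norm_num) (by norm_num) 25 16 10
    have h2 : Real.log ((4:ℝ) ^ 25 * (4/5) ^ 16 * (1/64) ^ 10) < 0 :=
      Real.log_neg (by norm_num) (by norm_num)
    rw [h] at h2; unfold Lres
    refine div_neg_of_neg_of_pos ?_ (by norm_num)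
    push_cast at h2; linarith
  · have h := log_combo (4/5) (4 * (1/64)) (1/(1/64)) (by norm_num) (by norm_num) (by norm_num) 25 16 10
    have h2 : Real.log (((4/5):ℝ) ^ 25 * (4 * (1/64)) ^ 16 * (1/(1/64)) ^ 10) < 0 :=
      Real.log_neg (by norm_num) (by norm_num)
    rw [h] at h2; unfold Lpre
    refine div_neg_of_neg_of_pos ?_ (by norm_num)
    push_cast at h2; linarith
  · have h := log_combo (4/5) (4 * (1/25)) (1/(1/25)) (by norm_num) (by norm_num) (by norm_num) 2 3 2
    have h2 : (0:ℝ) < Real.log (((4/5):ℝ) ^ 2 * (4 * (1/25)) ^ 3 * (1/(1/25)) ^ 2) :=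
      Real.log_pos (by norm_num)
    rw [h] at h2; unfold Lpre
    refine div_pos ?_ (by norm_num)
    push_cast at h2; linarith
  · have h := log_combo 4 (4 * (1/25)) 1 (by norm_num) (by norm_num) (by norm_num) 2 3 0
    have h2 : Real.log ((4:ℝ) ^ 2 * (4 * (1/25)) ^ 3 * 1 ^ 0) < 0 :=
      Real.log_neg (by norm_num) (by norm_num)
    rw [h] at h2; unfold LX
    refine div_neg_of_neg_of_pos ?_ (by norm_num)
    push_cast at h2; linarith
  · have h := log_combo 4 (4/5) (1/25) (by norm_num) (by norm_num) (by norm_num) 2 3 2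
    have h2 : Real.log ((4:ℝ) ^ 2 * (4/5) ^ 3 * (1/25) ^ 2) < 0 :=
      Real.log_neg (by norm_num) (by norm_num)
    rw [h] at h2; unfold Lres
    refine div_neg_of_neg_of_pos ?_ (by norm_num)
    push_cast at h2; linarith
  · have h := log_combo (12/5) (2 * (1/25) + 2/5) 1 (by norm_num) (by norm_num) (by norm_num) 2 3 0
    have h2 : Real.log (((12/5):ℝ) ^ 2 * (2 * (1/25) + 2/5) ^ 3 * 1 ^ 0) < 0 :=
      Real.log_neg (by norm_num) (by norm_num)
    rw [h] at h2; unfold Lsto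
    refine div_neg_of_neg_of_pos ?_ (by norm_num)
    push_cast at h2; linarith
  · have h := log_combo 4 (4 * (1/5)) 1 (by norm_num) (by norm_num) (by norm_num) 8 40 0
    have h2 : (0:ℝ) < Real.log ((4:ℝ) ^ 8 * (4 * (1/5)) ^ 40 * 1 ^ 0) :=
      Real.log_pos (by norm_num)
    rw [h] at h2; unfold LX
    refine div_pos ?_ (by norm_num)
    push_cast at h2; linarith
  · have h := log_combo 4 (4/5) (1/5) (by norm_num) (by norm_num) (by norm_num) 8 40 5
    have h2 : Real.log ((4:ℝ) ^ 8 * (4/5) ^ 40 * (1/5) ^ 5) < 0 :=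
      Real.log_neg (by norm_num) (by norm_num)
    rw [h] at h2; unfold Lres
    refine div_neg_of_neg_of_pos ?_ (by norm_num)
    push_cast at h2; linarith
  · have h := log_combo (12/5) (2 * (1/5) + 2/5) 1 (by norm_num) (by norm_num) (by norm_num) 8 40 0
    have h2 : Real.log (((12/5):ℝ) ^ 8 * (2 * (1/5) + 2/5) ^ 40 * 1 ^ 0) < 0 :=
      Real.log_neg (by norm_num) (by norm_num)
    rw [h] at h2; unfold Lsto
    refine div_neg_of_neg_of_pos ?_ (by norm_num)
    push_cast at h2; linarith
  · have h := log_combo (4/5) (4 * (1/5)) (1/(1/5)) (by norm_num) (by norm_num) (by norm_num) 8 40 5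
    have h2 : Real.log (((4/5):ℝ) ^ 8 * (4 * (1/5)) ^ 40 * (1/(1/5)) ^ 5) < 0 :=
      Real.log_neg (by norm_num) (by norm_num)
    rw [h] at h2; unfold Lpre
    refine div_neg_of_neg_of_pos ?_ (by norm_num)
    push_cast at h2; linarith
end

section
/- Let Q_X : ℕ → [0,1] be a probability mass function on ℕ and Q_Z : ℕ×ℕ → [0,1] a probability mass function on ℕ×ℕ. Assume that for every k ≥ 1, Q_X(k) ≥ Σ_{l=0}^{k} Q_Z(k−l, l). Then for every s ∈ [0,1], Σ_{k≥0} Q_X(k)·s^k ≤ Σ_{(k,l)∈ℕ×ℕ} Q_Z(k,l)·s^{k+l}. -/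
/-!
Write `g n = ∑_{k+l=n} Q_Z(k,l)` for the law of the total offspring, so that the right-hand side is
`∑ g n sⁿ`. The differences `d n = Q_X n - g n` have total sum `1 - 1 = 0` and are nonnegative for
`n ≥ 1`, hence `∑ d n sⁿ ≤ ∑ d n = 0` for `s ∈ [0,1]`: the weight `sⁿ ≤ 1` can only shrink the
nonnegative terms, while the possibly negative term `d 0` keeps its weight `s⁰ = 1`.
-/

open Finset

theorem summable_of_tsum_ne_zero {ι α : Type*} [AddCommMonoid α] [TopologicalSpace α]
    {f : ι → α} (h : ∑' i, f i ≠ 0) : Summable f :=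
  by_contra fun hf ↦ h (tsum_eq_zero_of_not_summable hf)

theorem HasSum.sum_antidiagonal {A α : Type*} [AddMonoid A] [HasAntidiagonal A]
    [AddCommMonoid α] [TopologicalSpace α] [ContinuousAdd α] [RegularSpace α]
    {f : A × A → α} {a : α} (h : HasSum f a) :
    HasSum (fun n ↦ ∑ p ∈ antidiagonal n, f p) a :=
  (HasAntidiagonal.sigmaAntidiagonalEquivProd.hasSum_iff.mpr h).sigma
    fun n ↦ (antidiagonal n).hasSum f

theorem tsum_mul_pow_add_eq_tsum_sum_antidiagonal {α : Type*} [CommSemiring α]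
    [TopologicalSpace α] [ContinuousAdd α] [T3Space α] {f : ℕ × ℕ → α} {s : α}
    (hf : Summable fun p : ℕ × ℕ ↦ f p * s ^ (p.1 + p.2)) :
    ∑' p : ℕ × ℕ, f p * s ^ (p.1 + p.2) = ∑' n, (∑ p ∈ antidiagonal n, f p) * s ^ n := by
  refine hf.hasSum.sum_antidiagonal.tsum_eq.symm.trans (tsum_congr fun n ↦ ?_)
  rw [sum_mul]
  exact sum_congr rfl fun p hp ↦ by rw [mem_antidiagonal.mp hp]

theorem Nat.sum_antidiagonal_eq_sum_range_succ_sub {M : Type*} [AddCommMonoid M]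
    (f : ℕ × ℕ → M) (n : ℕ) :
    ∑ p ∈ antidiagonal n, f p = ∑ l ∈ range (n + 1), f (n - l, l) := by
  rw [← Nat.sum_antidiagonal_swap]
  exact Nat.sum_antidiagonal_eq_sum_range_succ (fun k l ↦ f (l, k)) n

theorem Summable.mul_pow_of_abs_le_one {ι : Type*} {f : ι → ℝ} (hf : Summable f) {s : ℝ}
    (hs : |s| ≤ 1) (e : ι → ℕ) : Summable fun i ↦ f i * s ^ e i :=
  hf.abs.of_norm_bounded fun i ↦ by
    rw [Real.norm_eq_abs, abs_mul, abs_pow]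
    exact mul_le_of_le_one_right (abs_nonneg _) (pow_le_one₀ (abs_nonneg s) hs)

theorem tsum_mul_pow_le_tsum {d : ℕ → ℝ} (hd : Summable d) (hpos : ∀ k, 1 ≤ k → 0 ≤ d k)
    {s : ℝ} (hs0 : 0 ≤ s) (hs1 : s ≤ 1) : ∑' k, d k * s ^ k ≤ ∑' k, d k := by
  refine (hd.mul_pow_of_abs_le_one ((abs_of_nonneg hs0).trans_le hs1) id).tsum_le_tsum
    (fun k ↦ ?_) hd
  rcases k.eq_zero_or_pos with rfl | hk
  · simp
  · exact mul_le_of_le_one_right (hpos k hk) (pow_le_one₀ hs0 hs1)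

theorem pgf_comparison_general
    (QX : ℕ → ℝ)
    (hQXsum : ∑' k, QX k = 1)
    (QZ : ℕ × ℕ → ℝ)
    (hQZsum : ∑' p, QZ p = 1)
    (hdom : ∀ k : ℕ, 1 ≤ k → (∑ l ∈ Finset.range (k + 1), QZ (k - l, l)) ≤ QX k) :
    ∀ s ∈ Set.Icc (0 : ℝ) 1,
      ∑' k : ℕ, QX k * s ^ k ≤ ∑' p : ℕ × ℕ, QZ p * s ^ (p.1 + p.2) := by
  rintro s ⟨hs0, hs1⟩
  have hs : |s| ≤ 1 := (abs_of_nonneg hs0).trans_le hs1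
  have hX : Summable QX := summable_of_tsum_ne_zero (by simp [hQXsum])
  have hZ : HasSum QZ 1 := hQZsum ▸ (summable_of_tsum_ne_zero (by simp [hQZsum])).hasSum
  rw [tsum_mul_pow_add_eq_tsum_sum_antidiagonal (hZ.summable.mul_pow_of_abs_le_one hs _)]
  set g : ℕ → ℝ := fun n ↦ ∑ p ∈ antidiagonal n, QZ p
  have hg : HasSum g 1 := hZ.sum_antidiagonal
  have hgX : ∀ k, 1 ≤ k → 0 ≤ QX k - g k := fun k hk ↦
    sub_nonneg.mpr ((Nat.sum_antidiagonal_eq_sum_range_succ_sub QZ k).trans_le (hdom k hk))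
  have hsplit : ∑' k, (QX k - g k) * s ^ k = ∑' k, QX k * s ^ k - ∑' k, g k * s ^ k := by
    simp_rw [sub_mul]
    exact (hX.mul_pow_of_abs_le_one hs id).tsum_sub (hg.summable.mul_pow_of_abs_le_one hs id)
  rw [← sub_nonpos, ← hsplit]
  calc ∑' k, (QX k - g k) * s ^ k ≤ ∑' k, (QX k - g k) :=
        tsum_mul_pow_le_tsum (hX.sub hg.summable) hgX hs0 hs1
    _ = 0 := by rw [hX.tsum_sub hg.summable, hQXsum, hg.tsum_eq, sub_self]

/-- Generating-function comparison: if the offspring law Q_X stochastically dominates the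
total-offspring law of Q_Z (condition (2.2) of the paper), then the probability generating
function of Q_X is dominated by that of the total offspring under Q_Z. -/
theorem pgf_comparison
    (QX : ℕ → ℝ) (hQX0 : ∀ k, 0 ≤ QX k) (hQX1 : ∀ k, QX k ≤ 1)
    (hQXsum : ∑' k, QX k = 1)
    (QZ : ℕ × ℕ → ℝ) (hQZ0 : ∀ p, 0 ≤ QZ p) (hQZ1 : ∀ p, QZ p ≤ 1)
    (hQZsum : ∑' p, QZ p = 1)
    (hdom : ∀ k : ℕ, 1 ≤ k → (∑ l ∈ Finset.range (k + 1), QZ (k - l, l)) ≤ QX k) :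
    ∀ s ∈ Set.Icc (0 : ℝ) 1,
      ∑' k : ℕ, QX k * s ^ k ≤ ∑' p : ℕ × ℕ, QZ p * s ^ (p.1 + p.2) :=
  pgf_comparison_general QX hQXsum QZ hQZsum hdom
end

section
/- Let A : {1,2}×{1,2} → 2×2 real matrices with nonnegative entries, and define the 4×4 block matrix Â with blocks [[(1−s₁)·A(1,1), s₁·A(1,2)], [s₂·A(2,1), (1−s₂)·A(2,2)]]. Then for every n ≥ 2, 𝔼[ ‖ A(I_1,I_2)·A(I_2,I_3)·…·A(I_{n−1},I_n) ‖ ] = (π ⊗ 𝟙₂)ᵀ · Â^{n−1} · 𝟙₄, where 𝟙_k = (1, …, 1) ∈ ℝ^k and π ⊗ 𝟙₂ = (π₁, π₁, π₂, π₂). -/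
/-!
The integrand depends on `ω` only through the word `(I₁, …, Iₙ)`. Since `T` preserves `μ`, this
word has the same law as `(I₀, …, I_{n-1})`, namely the Markov law `π(w₀) ∏ P(w_k, w_{k+1})`.
For nonnegative matrices, `‖A(w₀,w₁)⋯‖` is the sum over index paths `y` of
`∏ A(w_k,w_{k+1})(y_k,y_{k+1})`, so the expectation is a sum over pairs of paths `(w, y)`. Expanding
`(π ⊗ 𝟙)ᵀ Â^{n-1} 𝟙` over paths in `{1,2} × {1,2}` gives the same sum, because the entry of `Â` at
`((i,y),(j,z))` is `P(i,j) A(i,j)(y,z)`.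
-/

open MeasureTheory Filter Topology

open Matrix

theorem sum_vecMul_list_prod_ofFn {ι R : Type*} [Fintype ι] [DecidableEq ι] [CommSemiring R]
    (m : ℕ) (M : Fin m → Matrix ι ι R) (u : ι → R) :
    ∑ b, (u ᵥ* (List.ofFn M).prod) b
      = ∑ y : Fin (m + 1) → ι, u (y 0) * ∏ k, M k (y k.castSucc) (y k.succ) := by
  induction m generalizing u with
  | zero =>
    rw [← (Equiv.funUnique (Fin 1) ι).symm.sum_comp]
    simp
  | succ m ih =>
    rw [List.ofFn_succ, List.prod_cons, ← vecMul_vecMul, ih,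
      ← (Fin.consEquiv fun _ => ι).sum_comp
        (fun y => u (y 0) * ∏ k, M k (y k.castSucc) (y k.succ)),
      Fintype.sum_prod_type, Finset.sum_comm]
    refine Finset.sum_congr rfl fun y _ => ?_
    simp [vecMul, dotProduct, Finset.sum_mul, Fin.prod_univ_succ, Fin.consEquiv, mul_assoc]

theorem sum_sum_mul_apply_eq_sum_vecMul {ι κ R : Type*} [Fintype ι] [Fintype κ] [CommSemiring R]
    (u : ι → R) (M : Matrix ι κ R) :
    ∑ a, ∑ b, u a * M a b = ∑ b, (u ᵥ* M) b := by
  simp only [vecMul, dotProduct]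
  exact Finset.sum_comm

theorem list_prod_apply_nonneg {ι R : Type*} [Fintype ι] [DecidableEq ι] [Semiring R]
    [PartialOrder R] [IsOrderedRing R] (L : List (Matrix ι ι R))
    (hL : ∀ M ∈ L, ∀ i j, 0 ≤ M i j) (i j : ι) :
    0 ≤ L.prod i j := by
  induction L generalizing i with
  | nil =>
    rw [List.prod_nil, one_apply]
    split_ifs <;> simp
  | cons M L ih =>
    rw [List.prod_cons, mul_apply]
    exact Finset.sum_nonneg fun k _ =>
      mul_nonneg (hL M List.mem_cons_self i k) (ih (fun N hN => hL N (List.mem_cons_of_mem _ hN)) k)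

theorem matNorm_list_prod_ofFn_of_nonneg {ι : Type*} [Fintype ι] [DecidableEq ι] {m : ℕ}
    (M : Fin m → Matrix ι ι ℝ) (hM : ∀ k i j, 0 ≤ M k i j) :
    matNorm (List.ofFn M).prod = ∑ y : Fin (m + 1) → ι, ∏ k, M k (y k.castSucc) (y k.succ) := by
  have hprod := list_prod_apply_nonneg (List.ofFn M) (by simpa using hM)
  have hpaths := sum_vecMul_list_prod_ofFn m M 1
  rw [← sum_sum_mul_apply_eq_sum_vecMul] at hpaths
  simpa [matNorm, abs_of_nonneg (hprod _ _)] using hpaths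

theorem sum_sum_mul_blockMatrix_pow_apply {ι κ R : Type*} [Fintype ι] [DecidableEq ι]
    [Fintype κ] [DecidableEq κ] [CommSemiring R]
    (π : ι → R) (P : Matrix ι ι R) (A : ι → ι → Matrix κ κ R) (m : ℕ) :
    ∑ a : ι × κ, ∑ b : ι × κ,
        π a.1 * ((Matrix.of fun a b : ι × κ => P a.1 b.1 * A a.1 b.1 a.2 b.2) ^ m) a b
      = ∑ w : Fin (m + 1) → ι, π (w 0) * (∏ k : Fin m, P (w k.castSucc) (w k.succ)) *
          ∑ y : Fin (m + 1) → κ,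
            ∏ k : Fin m, A (w k.castSucc) (w k.succ) (y k.castSucc) (y k.succ) := by
  rw [sum_sum_mul_apply_eq_sum_vecMul, ← List.prod_replicate, ← List.ofFn_const,
    sum_vecMul_list_prod_ofFn, ← (Equiv.arrowProdEquivProdArrow _ _ _).symm.sum_comp,
    Fintype.sum_prod_type]
  refine Finset.sum_congr rfl fun w _ => ?_
  simp [Finset.mul_sum, Finset.prod_mul_distrib, Equiv.arrowProdEquivProdArrow, mul_assoc]

theorem integral_comp_eq_sum_measureReal {Ω α : Type*} [MeasurableSpace Ω] [MeasurableSpace α]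
    [Fintype α] [DiscreteMeasurableSpace α] (μ : Measure Ω) [IsFiniteMeasure μ] {X : Ω → α}
    (hX : Measurable X) (f : α → ℝ) :
    ∫ ω, f (X ω) ∂μ = ∑ a, μ.real (X ⁻¹' {a}) * f a := by
  rw [← integral_map hX.aemeasurable (by fun_prop), integral_fintype .of_finite]
  simp [map_measureReal_apply hX (measurableSet_singleton _)]

theorem measure_shifted_word {Ω α : Type*} [MeasurableSpace Ω] [MeasurableSpace α]
    [MeasurableSingletonClass α] {μ : Measure Ω} {T : Ω → Ω} (hT : MeasurePreserving T μ μ)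
    {e : Ω → α} (he : Measurable e) {N : ℕ} (w : Fin N → α) :
    μ {ω | ∀ k : Fin N, e (T^[k + 1] ω) = w k} = μ {ω | ∀ k : Fin N, e (T^[k] ω) = w k} := by
  have hword : MeasurableSet {ω | ∀ k : Fin N, e (T^[k] ω) = w k} := by
    simp only [Set.ofPred_forall]
    exact .iInter fun k => he.comp (hT.measurable.iterate k) (measurableSet_singleton _)
  simpa only [Set.preimage_ofPred_eq, ← Function.iterate_succ_apply] using
    hT.measure_preimage hword.nullMeasurableSet

theorem envPi_nonneg {s : Fin 2 → ℝ} (hs : ∀ i, 0 ≤ s i) (i : Fin 2) : 0 ≤ envPi s i := by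
  fin_cases i <;> exact div_nonneg (hs _) (add_nonneg (hs 0) (hs 1))

theorem envP_nonneg {s : Fin 2 → ℝ} (hs : ∀ i, s i ∈ Set.Icc (0 : ℝ) 1) (i j : Fin 2) :
    0 ≤ envP s i j := by
  fin_cases i <;> fin_cases j <;> simp [envP, (hs _).1, (hs _).2]

theorem expected_norm_eq_block_matrix_power_general
    {Ω : Type*} [MeasurableSpace Ω] (μ : Measure Ω) [IsProbabilityMeasure μ]
    (T : Ω → Ω) (hT : Ergodic T μ) (e : Ω → Fin 2) (he : Measurable e)
    (s : Fin 2 → ℝ) (hs : ∀ i, s i ∈ Set.Ioc (0 : ℝ) 1)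
    (hMarkov : ∀ n : ℕ, ∀ w : Fin (n + 1) → Fin 2,
      μ {ω | ∀ k : Fin (n + 1), e (T^[(k : ℕ)] ω) = w k}
        = ENNReal.ofReal (envPi s (w 0) * ∏ k : Fin n, envP s (w k.castSucc) (w k.succ)))
    (A : Fin 2 → Fin 2 → Matrix (Fin 2) (Fin 2) ℝ) (hA : ∀ i j y z, 0 ≤ A i j y z)
    (n : ℕ) :
    ∫ ω, matNorm (((List.range (n - 1)).map (fun k =>
        A (e (T^[k+1] ω)) (e (T^[k+2] ω)))).prod) ∂μ
      = ∑ a : Fin 2 × Fin 2, ∑ b : Fin 2 × Fin 2,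
          envPi s a.1 *
            ((Matrix.of fun a' b' : Fin 2 × Fin 2 =>
              envP s a'.1 b'.1 * A a'.1 b'.1 a'.2 b'.2) ^ (n - 1)) a b := by
  set m := n - 1
  set X : Ω → Fin (m + 1) → Fin 2 := fun ω k => e (T^[k + 1] ω)
  have hX : Measurable X := measurable_pi_lambda _ fun k => he.comp (hT.measurable.iterate _)
  have hlaw (w : Fin (m + 1) → Fin 2) :
      μ.real (X ⁻¹' {w}) = envPi s (w 0) * ∏ k : Fin m, envP s (w k.castSucc) (w k.succ) := by
    have hs' : ∀ i, s i ∈ Set.Icc (0 : ℝ) 1 := fun i => Set.Ioc_subset_Icc_self (hs i)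
    have hpre : X ⁻¹' {w} = {ω | ∀ k : Fin (m + 1), e (T^[k + 1] ω) = w k} := by
      ext ω; simp [X, funext_iff]
    rw [measureReal_def, hpre, measure_shifted_word hT.toMeasurePreserving he, hMarkov,
      ENNReal.toReal_ofReal (mul_nonneg (envPi_nonneg (fun i => (hs' i).1) _)
        (Finset.prod_nonneg fun _ _ => envP_nonneg hs' _ _))]
  have hpath (ω : Ω) : (List.range m).map (fun k => A (e (T^[k+1] ω)) (e (T^[k+2] ω)))
      = List.ofFn fun k : Fin m => A (X ω k.castSucc) (X ω k.succ) := by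
    rw [← List.map_coe_finRange_eq_range, List.map_map, List.ofFn_eq_map]
    rfl
  simp_rw [hpath]
  rw [integral_comp_eq_sum_measureReal μ hX
      (fun w => matNorm (List.ofFn fun k : Fin m => A (w k.castSucc) (w k.succ)).prod),
    sum_sum_mul_blockMatrix_pow_apply]
  refine Finset.sum_congr rfl fun w _ => ?_
  rw [hlaw, matNorm_list_prod_ofFn_of_nonneg _ fun k => hA _ _]

/-- The expected entrywise norm of the product A(I₁,I₂)⋯A(I_{n−1},I_n) equals
(π ⊗ 𝟙₂)ᵀ · Â^{n−1} · 𝟙₄, where Â is the 4×4 block matrix with blocks P_{ij}·A(i,j). -/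
theorem expected_norm_eq_block_matrix_power
    {Ω : Type*} [MeasurableSpace Ω] (μ : Measure Ω) [IsProbabilityMeasure μ]
    (T : Ω → Ω) (hT : Ergodic T μ) (e : Ω → Fin 2) (he : Measurable e)
    (s : Fin 2 → ℝ) (hs : ∀ i, s i ∈ Set.Ioc (0 : ℝ) 1) (hss : s 0 * s 1 < 1)
    (henv : ∀ i j : Fin 2, μ {ω | e ω = i ∧ e (T ω) = j}
      = ENNReal.ofReal (envPi s i * envP s i j))
    (hMarkov : ∀ n : ℕ, ∀ w : Fin (n + 1) → Fin 2,
      μ {ω | ∀ k : Fin (n + 1), e (T^[(k : ℕ)] ω) = w k}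
        = ENNReal.ofReal (envPi s (w 0) * ∏ k : Fin n, envP s (w k.castSucc) (w k.succ)))
    (A : Fin 2 → Fin 2 → Matrix (Fin 2) (Fin 2) ℝ) (hA : ∀ i j y z, 0 ≤ A i j y z)
    (n : ℕ) (hn : 2 ≤ n) :
    ∫ ω, matNorm (((List.range (n - 1)).map (fun k =>
        A (e (T^[k+1] ω)) (e (T^[k+2] ω)))).prod) ∂μ
      = ∑ a : Fin 2 × Fin 2, ∑ b : Fin 2 × Fin 2,
          envPi s a.1 *
            ((Matrix.of fun a' b' : Fin 2 × Fin 2 =>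
              envP s a'.1 b'.1 * A a'.1 b'.1 a'.2 b'.2) ^ (n - 1)) a b :=
  expected_norm_eq_block_matrix_power_general μ T hT e he s hs hMarkov A hA n
end
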